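/- arXiv:1104.0253 — 7 statements merged into one kernel-verified Lean document; each statement's English description precedes it below -/
import Mathlib

section
/- For the function x_N(t) = 1 - (s + m/N)/(s + (m/N)·e^{(s+m/N)t}), evaluated at time t = C·log N + t₀ with fixed t₀ ∈ ℝ: if C < 1/s then x_N(C log N + t₀) → 0 as N → ∞, and if C > 1/s then x_N(C log N + t₀) → 1 as N → ∞. -/
open Real Filter
open scoped Topology

/-- The solution of the single-site deterministic Fisher-Wright ODE with mutation rate `m/N`
and selection rate `s`, started from `x_N(0) = 0`. -/
noncomputable def xN (m s : ℝ) (N : ℕ) (t : ℝ) : ℝ :=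
  1 - (s + m / (N : ℝ)) / (s + m / (N : ℝ) * Real.exp ((s + m / (N : ℝ)) * t))

/-!
Write `a_N = s + m/N` and `t_N = C log N + t₀`, so that `x_N(t_N) = 1 - a_N / (s + g_N)` with
`g_N = growthTerm m s C t₀ N = (m/N) e^{a_N t_N} = m e^{a_N t₀} N^{a_N C - 1}`. Since `a_N → s`, the exponent
`(a_N C - 1) log N` tends to `-∞` when `sC < 1` and to `+∞` when `sC > 1`; hence `g_N → 0`
and `x_N(t_N) → 1 - s/s = 0`, respectively `g_N → ∞` and `x_N(t_N) → 1`.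
-/

section OneSubDiv

variable {α : Type*} {l : Filter α} {a g : α → ℝ} {s : ℝ}

lemma tendsto_one_sub_div_const_add_of_tendsto_zero (hs : s ≠ 0) (ha : Tendsto a l (𝓝 s))
    (hg : Tendsto g l (𝓝 0)) : Tendsto (fun x => 1 - a x / (s + g x)) l (𝓝 0) := by
  have hden : Tendsto (fun x => s + g x) l (𝓝 s) := by
    simpa using tendsto_const_nhds.add hg
  simpa [div_self hs] using (tendsto_const_nhds (x := (1 : ℝ))).sub (ha.div hden hs)

lemma tendsto_one_sub_div_const_add_of_tendsto_atTop (ha : Tendsto a l (𝓝 s))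
    (hg : Tendsto g l atTop) : Tendsto (fun x => 1 - a x / (s + g x)) l (𝓝 1) := by
  simpa using tendsto_const_nhds.sub (ha.div_atTop (tendsto_atTop_add_const_left l s hg))

end OneSubDiv

lemma div_mul_exp_mul_add_log_eq {x : ℝ} (hx : 0 < x) (m a C t₀ : ℝ) :
    m / x * exp (a * (C * log x + t₀)) = m * exp (a * t₀) * exp ((a * C - 1) * log x) := by
  rw [sub_mul, one_mul, exp_sub, exp_log hx, mul_add, exp_add, ← mul_assoc]
  field_simp

lemma tendsto_log_natCast_atTop : Tendsto (fun N : ℕ => log N) atTop atTop :=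
  tendsto_log_atTop.comp tendsto_natCast_atTop_atTop

noncomputable def growthTerm (m s C t₀ : ℝ) (N : ℕ) : ℝ :=
  m / N * exp ((s + m / N) * (C * log N + t₀))

section GrowthTerm

variable (m s C t₀ : ℝ)

lemma tendsto_add_div_natCast : Tendsto (fun N : ℕ => s + m / N) atTop (𝓝 s) := by
  simpa using tendsto_const_nhds.add (tendsto_const_div_atTop_nhds_zero_nat m)

lemma growthTerm_eventuallyEq :
    growthTerm m s C t₀ =ᶠ[atTop]
      fun N : ℕ => m * exp ((s + m / N) * t₀) * exp (((s + m / N) * C - 1) * log N) := by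
  filter_upwards [eventually_gt_atTop 0] with N hN
  exact div_mul_exp_mul_add_log_eq (Nat.cast_pos.mpr hN) _ _ _ _

lemma tendsto_growthTerm_prefactor :
    Tendsto (fun N : ℕ => m * exp ((s + m / N) * t₀)) atTop (𝓝 (m * exp (s * t₀))) :=
  tendsto_const_nhds.mul (continuous_exp.tendsto _ |>.comp
    ((tendsto_add_div_natCast m s).mul_const t₀))

lemma tendsto_growthTerm_exponent_coeff :
    Tendsto (fun N : ℕ => (s + m / N) * C - 1) atTop (𝓝 (s * C - 1)) :=
  ((tendsto_add_div_natCast m s).mul_const C).sub_const 1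

lemma tendsto_growthTerm_zero (hsC : s * C < 1) :
    Tendsto (growthTerm m s C t₀) atTop (𝓝 0) := by
  have hexp := (tendsto_growthTerm_exponent_coeff m s C).neg_mul_atTop (by linarith)
    tendsto_log_natCast_atTop
  refine Tendsto.congr' (growthTerm_eventuallyEq m s C t₀).symm ?_
  simpa using (tendsto_growthTerm_prefactor m s t₀).mul (tendsto_exp_atBot.comp hexp)

lemma tendsto_growthTerm_atTop (hm : 0 < m) (hsC : 1 < s * C) :
    Tendsto (growthTerm m s C t₀) atTop atTop := by
  have hexp := (tendsto_growthTerm_exponent_coeff m s C).pos_mul_atTop (by linarith)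
    tendsto_log_natCast_atTop
  refine Tendsto.congr' (growthTerm_eventuallyEq m s C t₀).symm ?_
  exact (tendsto_growthTerm_prefactor m s t₀).pos_mul_atTop (by positivity)
    (tendsto_exp_atTop.comp hexp)

end GrowthTerm

theorem xN_emergence_dichotomy_general (m s C t₀ : ℝ) (hm : 0 < m) (hs : 0 < s) :
    (C < 1 / s →
      Tendsto (fun N : ℕ => xN m s N (C * Real.log (N : ℝ) + t₀)) atTop (𝓝 0)) ∧
    (1 / s < C →
      Tendsto (fun N : ℕ => xN m s N (C * Real.log (N : ℝ) + t₀)) atTop (𝓝 1)) := by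
  have ha := tendsto_add_div_natCast m s
  refine ⟨fun hCs => ?_, fun hCs => ?_⟩
  · have hsC : s * C < 1 := by rwa [lt_div_iff₀ hs, mul_comm] at hCs
    exact tendsto_one_sub_div_const_add_of_tendsto_zero hs.ne' ha
      (tendsto_growthTerm_zero m s C t₀ hsC)
  · have hsC : 1 < s * C := by rwa [div_lt_iff₀ hs, mul_comm] at hCs
    exact tendsto_one_sub_div_const_add_of_tendsto_atTop ha
      (tendsto_growthTerm_atTop m s C t₀ hm hsC)

/-- Dichotomy at time scale `C log N + t₀`: for `C < 1/s` the mutant frequency tends to `0`,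
for `C > 1/s` it tends to `1`, as `N → ∞`. -/
theorem xN_emergence_dichotomy (m s C t₀ : ℝ) (hm : 0 < m) (hs : 0 < s) (hC : 0 < C) :
    (C < 1 / s →
      Tendsto (fun N : ℕ => xN m s N (C * Real.log (N : ℝ) + t₀)) atTop (𝓝 0)) ∧
    (1 / s < C →
      Tendsto (fun N : ℕ => xN m s N (C * Real.log (N : ℝ) + t₀)) atTop (𝓝 1)) :=
  xN_emergence_dichotomy_general m s C t₀ hm hs
end

section
/- At the critical time scale C = 1/s, the solution satisfies x_N((log N)/s + t) → 1 - s/(s + m·e^{st}) as N → ∞, for every fixed t ∈ ℝ. Moreover the limit function t ↦ 1 - s/(s + m·e^{st}) tends to 1 as t → ∞ and to 0 as t → -∞. -/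
/-!
Substituting `τ = (log N)/s + t`, the factor `N` produced by `exp ((s + m/N) τ)` cancels the
small mutation rate `m/N`, leaving `m · exp (s t + (m/s)(log N)/N + (m/N) t)`. Since
`(log N)/N → 0` and `m/N → 0`, continuity of the resulting expression gives the limit.
-/

open Real Filter
open scoped Topology

namespace FisherWright

lemma mul_log_div_add_eq (m s t : ℝ) {N : ℝ} (hs : s ≠ 0) (hN : N ≠ 0) :
    (s + m / N) * (log N / s + t) = m / s * (log N / N) + (s + m / N) * t + log N := by
  field_simp
  ring

lemma xN_log_div_add_eq (m s t : ℝ) {N : ℕ} (hs : s ≠ 0) (hN : N ≠ 0) :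
    xN m s N (log N / s + t) =
      1 - (s + m / N) / (s + m * exp (m / s * (log N / N) + (s + m / N) * t)) := by
  have hN' : (N : ℝ) ≠ 0 := Nat.cast_ne_zero.mpr hN
  rw [xN, mul_log_div_add_eq m s t hs hN', exp_add, exp_log (by positivity)]
  field_simp

lemma tendsto_xN_log_div_add {m s : ℝ} (hm : 0 ≤ m) (hs : 0 < s) (t : ℝ) :
    Tendsto (fun N : ℕ => xN m s N (log N / s + t)) atTop
      (𝓝 (1 - s / (s + m * exp (s * t)))) := by
  have hmN : Tendsto (fun N : ℕ => m / N) atTop (𝓝 0) :=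
    tendsto_const_div_atTop_nhds_zero_nat m
  have hlog : Tendsto (fun N : ℕ => log N / N) atTop (𝓝 0) :=
    isLittleO_log_id_atTop.tendsto_div_nhds_zero.comp tendsto_natCast_atTop_atTop
  have hrate : Tendsto (fun N : ℕ => s + m / N) atTop (𝓝 s) := by
    simpa using hmN.const_add s
  have hexponent :
      Tendsto (fun N : ℕ => m / s * (log N / N) + (s + m / N) * t) atTop (𝓝 (s * t)) := by
    simpa using (hlog.const_mul (m / s)).add (hrate.mul_const t)
  have hlim : Tendsto (fun N : ℕ =>
      1 - (s + m / N) / (s + m * exp (m / s * (log N / N) + (s + m / N) * t))) atTop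
      (𝓝 (1 - s / (s + m * exp (s * t)))) :=
    (hrate.div ((hexponent.rexp.const_mul m).const_add s) (by positivity)).const_sub 1
  refine hlim.congr' ?_
  filter_upwards [eventually_ne_atTop 0] with N hN
  exact (xN_log_div_add_eq m s t hs.ne' hN).symm

lemma tendsto_one_sub_div_add_mul_exp_atTop {m s : ℝ} (hm : 0 < m) (hs : 0 < s) :
    Tendsto (fun t : ℝ => 1 - s / (s + m * exp (s * t))) atTop (𝓝 1) := by
  have hden : Tendsto (fun t : ℝ => s + m * exp (s * t)) atTop atTop :=
    tendsto_atTop_add_const_left _ _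
      ((tendsto_exp_atTop.comp (tendsto_id.const_mul_atTop hs)).const_mul_atTop hm)
  simpa using (tendsto_const_nhds.div_atTop hden).const_sub 1

lemma tendsto_one_sub_div_add_mul_exp_atBot (m : ℝ) {s : ℝ} (hs : 0 < s) :
    Tendsto (fun t : ℝ => 1 - s / (s + m * exp (s * t))) atBot (𝓝 0) := by
  have hexp : Tendsto (fun t : ℝ => exp (s * t)) atBot (𝓝 0) :=
    tendsto_exp_atBot.comp (tendsto_id.const_mul_atBot hs)
  have hden : Tendsto (fun t : ℝ => s + m * exp (s * t)) atBot (𝓝 s) := by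
    simpa using (hexp.const_mul m).const_add s
  simpa [div_self hs.ne'] using ((tendsto_const_nhds (x := s)).div hden hs.ne').const_sub 1

end FisherWright

open FisherWright in
/-- At the critical time scale `(log N)/s + t`, the mutant frequency converges to
`1 - s/(s + m e^{st})`; the limit function tends to `1` as `t → ∞` and to `0` as `t → -∞`. -/
theorem xN_critical_time_scale (m s : ℝ) (hm : 0 < m) (hs : 0 < s) :
    (∀ t : ℝ,
      Tendsto (fun N : ℕ => xN m s N (Real.log (N : ℝ) / s + t)) atTop
        (𝓝 (1 - s / (s + m * Real.exp (s * t))))) ∧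
    Tendsto (fun t : ℝ => 1 - s / (s + m * Real.exp (s * t))) atTop (𝓝 1) ∧
    Tendsto (fun t : ℝ => 1 - s / (s + m * Real.exp (s * t))) atBot (𝓝 0) :=
  ⟨tendsto_xN_log_div_add hm.le hs, tendsto_one_sub_div_add_mul_exp_atTop hm hs,
    tendsto_one_sub_div_add_mul_exp_atBot m hs⟩
end

section
/- Under the bound m₁(t) ≤ 2ŝ·n·e^{ŝt}/(n·d·(e^{ŝt}-1) + 2ŝ) with ŝ = s + d/2, the time integral satisfies ∫₀^t m₁(u) du ≤ (2/d)·log(2ŝ/d + n·(e^{ŝt} - 1)) for all t ≥ 0. -/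
/-!
The comparison bound is the logistic curve with rate `ŝ`, carrying capacity `2ŝ/d` and initial
value `n`. Writing it as `2ŝ n e^{ŝu} / D(u)` with `D(u) = n d (e^{ŝu} - 1) + 2ŝ`, the numerator is
`(2/d) D'(u)`, so its integral over `[0, t]` is `(2/d) log (D(t) / D(0))` with `D(0) = 2ŝ`.
Since `s > 0` gives `d ≤ 2ŝ`, replacing `D(0)` by `d` only increases the logarithm.
-/

open Real MeasureTheory Set

namespace OccupationTime

variable {c d n : ℝ}

noncomputable def logisticDenom (c d n u : ℝ) : ℝ := n * d * (exp (c * u) - 1) + 2 * c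

noncomputable def logistic (c d n u : ℝ) : ℝ := 2 * c * n * exp (c * u) / logisticDenom c d n u

lemma logisticDenom_zero : logisticDenom c d n 0 = 2 * c := by
  simp [logisticDenom]

lemma logisticDenom_pos (hc : 0 < c) (hd : 0 ≤ d) (hn : 0 ≤ n) {u : ℝ} (hu : 0 ≤ u) :
    0 < logisticDenom c d n u := by
  have : 0 ≤ exp (c * u) - 1 := sub_nonneg.2 (one_le_exp (by positivity))
  unfold logisticDenom
  positivity

lemma continuousOn_logistic (hc : 0 < c) (hd : 0 ≤ d) (hn : 0 ≤ n) :
    ContinuousOn (logistic c d n) (Ici 0) :=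
  ContinuousOn.div (by fun_prop) (by unfold logisticDenom; fun_prop)
    fun _ hu ↦ (logisticDenom_pos hc hd hn hu).ne'

lemma integrableOn_logistic (hc : 0 < c) (hd : 0 ≤ d) (hn : 0 ≤ n) (t : ℝ) :
    IntegrableOn (logistic c d n) (Ioc 0 t) :=
  ((continuousOn_logistic hc hd hn).mono Icc_subset_Ici_self).integrableOn_Icc.mono_set
    Ioc_subset_Icc_self

lemma hasDerivAt_log_logisticDenom (hd : d ≠ 0) {u : ℝ} (hu : 0 < logisticDenom c d n u) :
    HasDerivAt (fun v ↦ 2 / d * log (logisticDenom c d n v)) (logistic c d n u) u := by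
  have hD : HasDerivAt (logisticDenom c d n) (n * d * (exp (c * u) * c)) u :=
    ((((hasDerivAt_id u).const_mul c).exp.sub_const 1).const_mul (n * d)).add_const _
      |>.congr_deriv (by simp)
  refine ((hD.log hu.ne').const_mul (2 / d)).congr_deriv ?_
  unfold logistic
  field_simp

lemma integral_logistic (hc : 0 < c) (hd : 0 < d) (hn : 0 ≤ n) {t : ℝ} (ht : 0 ≤ t) :
    ∫ u in Ioc 0 t, logistic c d n u = 2 / d * log (logisticDenom c d n t / (2 * c)) := by
  have hpos : ∀ u ∈ Icc 0 t, 0 < logisticDenom c d n u := fun u hu ↦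
    logisticDenom_pos hc hd.le hn hu.1
  rw [← intervalIntegral.integral_of_le ht, intervalIntegral.integral_eq_sub_of_hasDerivAt
    (fun u hu ↦ hasDerivAt_log_logisticDenom hd.ne' (hpos u (uIcc_of_le ht ▸ hu)))
    ((intervalIntegrable_iff_integrableOn_Ioc_of_le ht).2 (integrableOn_logistic hc hd.le hn t)),
    log_div (hpos t ⟨ht, le_rfl⟩).ne' (by positivity), logisticDenom_zero]
  ring

lemma setIntegral_le_integral_logistic {m : ℝ → ℝ} (hc : 0 < c) (hd : 0 ≤ d) (hn : 0 ≤ n)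
    (hm : ∀ u, 0 ≤ m u) (hbound : ∀ u, 0 ≤ u → m u ≤ logistic c d n u) (t : ℝ) :
    ∫ u in Ioc 0 t, m u ≤ ∫ u in Ioc 0 t, logistic c d n u := by
  refine integral_mono_of_nonneg (.of_forall hm) (integrableOn_logistic hc hd hn t) ?_
  filter_upwards [ae_restrict_mem measurableSet_Ioc] with u hu
  exact hbound u hu.1.le

lemma logisticDenom_div_le (hd : 0 < d) (hdc : d ≤ 2 * c) {t : ℝ}
    (hD : 0 ≤ logisticDenom c d n t) :
    logisticDenom c d n t / (2 * c) ≤ 2 * c / d + n * (exp (c * t) - 1) :=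
  calc logisticDenom c d n t / (2 * c) ≤ logisticDenom c d n t / d :=
        div_le_div_of_nonneg_left hD hd hdc
    _ = 2 * c / d + n * (exp (c * t) - 1) := by
        unfold logisticDenom
        field_simp
        ring

end OccupationTime

open Real MeasureTheory OccupationTime

theorem occupation_time_log_bound_general (s d n : ℝ) (hs : 0 < s) (hd : 0 < d) (hn : 1 ≤ n)
    (m₁ : ℝ → ℝ) (hnonneg : ∀ u : ℝ, 0 ≤ m₁ u)
    (hbound : ∀ u : ℝ, 0 ≤ u →
      m₁ u ≤ 2 * (s + d / 2) * n * Real.exp ((s + d / 2) * u) /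
        (n * d * (Real.exp ((s + d / 2) * u) - 1) + 2 * (s + d / 2))) :
    ∀ t : ℝ, 0 ≤ t →
      (∫ u in Set.Ioc (0 : ℝ) t, m₁ u) ≤
        2 / d * Real.log (2 * (s + d / 2) / d + n * (Real.exp ((s + d / 2) * t) - 1)) := by
  intro t ht
  have hc : 0 < s + d / 2 := by positivity
  have hn₀ : 0 ≤ n := by linarith
  have hD := logisticDenom_pos hc hd.le hn₀ ht
  calc (∫ u in Set.Ioc (0 : ℝ) t, m₁ u)
      ≤ ∫ u in Set.Ioc (0 : ℝ) t, logistic (s + d / 2) d n u :=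
        setIntegral_le_integral_logistic hc hd.le hn₀ hnonneg hbound t
    _ = 2 / d * log (logisticDenom (s + d / 2) d n t / (2 * (s + d / 2))) :=
        integral_logistic hc hd hn₀ ht
    _ ≤ 2 / d * log (2 * (s + d / 2) / d + n * (exp ((s + d / 2) * t) - 1)) := by
        gcongr
        exact logisticDenom_div_le hd (by linarith) hD.le

/-- Integrated occupation-time bound: if `m₁` is nonnegative, measurable and satisfies the
Riccati comparison bound `m₁(u) ≤ 2ŝ n e^{ŝu}/(n d (e^{ŝu}-1) + 2ŝ)` with `ŝ = s + d/2`,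
then `∫₀^t m₁(u) du ≤ (2/d) log(2ŝ/d + n(e^{ŝt} - 1))` for all `t ≥ 0`. -/
theorem occupation_time_log_bound (s d n : ℝ) (hs : 0 < s) (hd : 0 < d) (hn : 1 ≤ n)
    (m₁ : ℝ → ℝ) (hmeas : Measurable m₁) (hnonneg : ∀ u : ℝ, 0 ≤ m₁ u)
    (hbound : ∀ u : ℝ, 0 ≤ u →
      m₁ u ≤ 2 * (s + d / 2) * n * Real.exp ((s + d / 2) * u) /
        (n * d * (Real.exp ((s + d / 2) * u) - 1) + 2 * (s + d / 2))) :
    ∀ t : ℝ, 0 ≤ t →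
      (∫ u in Set.Ioc (0 : ℝ) t, m₁ u) ≤
        2 / d * Real.log (2 * (s + d / 2) / d + n * (Real.exp ((s + d / 2) * t) - 1)) :=
  occupation_time_log_bound_general s d n hs hd hn m₁ hnonneg hbound
end

section
/- Let Π^{(n)}_t be a nonnegative integer-valued process with E[∫₀^{a_N} Π^{(n)}_u du] ≤ (2/d)·log(2ŝ/d + n(e^{ŝ a_N} - 1)), and let τ_N be the first time a rate-(m/N)·Π^{(n)}_t Poisson clock rings. If a_N/N → 0 as N → ∞, then P(τ_N < a_N) → 0 as N → ∞. -/
/-!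
Since `1 - e^{-x} ≤ x`, the probability of a ring before `a_N` is at most `(m/N) E[I_N]`.
The hypothesis bounds `E[I_N]` by `(2/d)(log(2ŝ/d + n) + ŝ a_N)`, because
`2ŝ/d + n(e^{ŝ a_N} - 1) ≤ (2ŝ/d + n) e^{ŝ a_N}`; divided by `N` this tends to `0` when `a_N = o(N)`.
-/

open Real Filter MeasureTheory
open scoped Topology

lemma Real.one_sub_exp_neg_nonneg {x : ℝ} (hx : 0 ≤ x) : 0 ≤ 1 - exp (-x) := by
  have : exp (-x) ≤ 1 := exp_le_one_iff.mpr (neg_nonpos.mpr hx)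
  linarith

lemma Real.one_sub_exp_neg_le (x : ℝ) : 1 - exp (-x) ≤ x := by
  linarith [add_one_le_exp (-x)]

lemma Real.log_add_mul_exp_sub_one_le {C n x : ℝ} (hC : 0 < C) (hn : 0 ≤ n) (hx : 0 ≤ x) :
    log (C + n * (exp x - 1)) ≤ log (C + n) + x := by
  have he : 1 ≤ exp x := one_le_exp hx
  calc log (C + n * (exp x - 1))
      ≤ log ((C + n) * exp x) := log_le_log (by nlinarith) (by nlinarith)
    _ = log (C + n) + x := by rw [log_mul (by positivity) (exp_ne_zero x), log_exp]

section Integral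

variable {Ω : Type*} [MeasurableSpace Ω] {μ : Measure Ω} {f : Ω → ℝ}

lemma integral_one_sub_exp_neg_mul_nonneg (hf : ∀ ω, 0 ≤ f ω) {c : ℝ} (hc : 0 ≤ c) :
    0 ≤ ∫ ω, (1 - exp (-c * f ω)) ∂μ :=
  integral_nonneg fun ω => by
    simpa only [Pi.zero_apply, neg_mul] using one_sub_exp_neg_nonneg (mul_nonneg hc (hf ω))

lemma integral_one_sub_exp_neg_mul_le (hf : ∀ ω, 0 ≤ f ω) (hfi : Integrable f μ) {c : ℝ}
    (hc : 0 ≤ c) : ∫ ω, (1 - exp (-c * f ω)) ∂μ ≤ c * ∫ ω, f ω ∂μ := by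
  rw [← integral_const_mul]
  refine integral_mono_of_nonneg (.of_forall fun ω => ?_) (hfi.const_mul c)
    (.of_forall fun ω => ?_)
  · simpa only [Pi.zero_apply, neg_mul] using one_sub_exp_neg_nonneg (mul_nonneg hc (hf ω))
  · simpa only [neg_mul] using one_sub_exp_neg_le (c * f ω)

end Integral

lemma tendsto_const_add_mul_div_natCast {a : ℕ → ℝ} (K L : ℝ)
    (ha : Tendsto (fun N : ℕ => a N / N) atTop (𝓝 0)) :
    Tendsto (fun N : ℕ => (K + L * a N) / N) atTop (𝓝 0) := by
  simpa only [add_div, mul_div_assoc, mul_zero, add_zero] using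
    (tendsto_const_div_atTop_nhds_zero_nat K).add (ha.const_mul L)

theorem no_mutation_before_aN_general (s d m n : ℝ) (hs : 0 < s) (hd : 0 < d) (hm : 0 < m) (hn : 1 ≤ n)
    {Ω : Type*} [MeasurableSpace Ω] (μ : ℕ → Measure Ω)
    (I : ℕ → Ω → ℝ) (hInn : ∀ N ω, 0 ≤ I N ω)
    (hIint : ∀ N, Integrable (I N) (μ N))
    (a : ℕ → ℝ) (ha : ∀ N, 0 ≤ a N)
    (hE : ∀ N : ℕ, 1 ≤ N →
      (∫ ω, I N ω ∂μ N) ≤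
        2 / d * Real.log (2 * (s + d / 2) / d + n * (Real.exp ((s + d / 2) * a N) - 1)))
    (halim : Tendsto (fun N : ℕ => a N / (N : ℝ)) atTop (𝓝 0)) :
    Tendsto (fun N : ℕ => ∫ ω, (1 - Real.exp (-(m / (N : ℝ)) * I N ω)) ∂μ N) atTop (𝓝 0) := by
  set sh := s + d / 2
  have hsh : 0 < sh := by positivity
  have hbound : ∀ N : ℕ, 1 ≤ N → ∫ ω, (1 - exp (-(m / N) * I N ω)) ∂μ N ≤
      m * (2 / d) * ((log (2 * sh / d + n) + sh * a N) / N) := fun N hN =>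
    calc ∫ ω, (1 - exp (-(m / N) * I N ω)) ∂μ N
        ≤ m / N * ∫ ω, I N ω ∂μ N :=
          integral_one_sub_exp_neg_mul_le (hInn N) (hIint N) (by positivity)
      _ ≤ m / N * (2 / d * (log (2 * sh / d + n) + sh * a N)) := by
          gcongr
          exact (hE N hN).trans <| mul_le_mul_of_nonneg_left
            (log_add_mul_exp_sub_one_le (by positivity) (by linarith)
              (mul_nonneg hsh.le (ha N))) (by positivity)
      _ = m * (2 / d) * ((log (2 * sh / d + n) + sh * a N) / N) := by ring
  have hlim := (tendsto_const_add_mul_div_natCast (log (2 * sh / d + n)) sh halim).const_mul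
    (m * (2 / d))
  rw [mul_zero] at hlim
  exact tendsto_of_tendsto_of_tendsto_of_le_of_le' tendsto_const_nhds hlim
    (.of_forall fun N => integral_one_sub_exp_neg_mul_nonneg (hInn N) (by positivity))
    (eventually_atTop.mpr ⟨1, hbound⟩)

/-- No mutation jump before time `a_N = o(N)`: if `I N = ∫₀^{a_N} Π^{(n)}_u du` is the dual
occupation time, with expectation bounded by `(2/d) log(2ŝ/d + n(e^{ŝ a_N} - 1))` (`ŝ = s + d/2`),
and `P(τ_N < a_N) = E[1 - exp(-(m/N) I_N)]` is the probability that a rate-`(m/N)·Π` Poisson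
clock rings before `a_N`, then `P(τ_N < a_N) → 0` as `N → ∞` whenever `a_N / N → 0`. -/
theorem no_mutation_before_aN (s d m n : ℝ) (hs : 0 < s) (hd : 0 < d) (hm : 0 < m) (hn : 1 ≤ n)
    {Ω : Type*} [MeasurableSpace Ω] (μ : ℕ → Measure Ω)
    (hprob : ∀ N, IsProbabilityMeasure (μ N))
    (I : ℕ → Ω → ℝ) (hImeas : ∀ N, Measurable (I N)) (hInn : ∀ N ω, 0 ≤ I N ω)
    (hIint : ∀ N, Integrable (I N) (μ N))
    (a : ℕ → ℝ) (ha : ∀ N, 0 ≤ a N)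
    (hE : ∀ N : ℕ, 1 ≤ N →
      (∫ ω, I N ω ∂μ N) ≤
        2 / d * Real.log (2 * (s + d / 2) / d + n * (Real.exp ((s + d / 2) * a N) - 1)))
    (halim : Tendsto (fun N : ℕ => a N / (N : ℝ)) atTop (𝓝 0)) :
    Tendsto (fun N : ℕ => ∫ ω, (1 - Real.exp (-(m / (N : ℝ)) * I N ω)) ∂μ N) atTop (𝓝 0) :=
  no_mutation_before_aN_general s d m n hs hd hm hn μ I hInn hIint a ha hE halim
end

section
/- Let (X₁,…,X_N) be exchangeable random variables with values in [0,1]. Then for every k, ℓ ∈ ℕ, E[((1/N)·∑_{i=1}^N X_i^k)^ℓ] - E[∏_{j=1}^ℓ X_{i_j}^k] → 0 as N → ∞, where (i_1,…,i_ℓ) are any ℓ distinct indices (by exchangeability the second expectation does not depend on the choice). -/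
open Real Filter MeasureTheory
open scoped Topology

private lemma aux_exists_perm_comp {ℓ N : ℕ} (ι f : Fin ℓ ↪ Fin N) :
    ∃ σ : Equiv.Perm (Fin N), ∀ j, σ (ι j) = f j := by
  classical
  have hcard : Fintype.card ((Set.range ι)ᶜ : Set (Fin N)) =
      Fintype.card ((Set.range f)ᶜ : Set (Fin N)) := by
    rw [Fintype.card_compl_set, Fintype.card_compl_set,
      Set.card_range_of_injective ι.injective, Set.card_range_of_injective f.injective]
  obtain ⟨e₁⟩ := Fintype.card_eq.mp hcard
  set e₀ : (Set.range ι : Set (Fin N)) ≃ (Set.range f : Set (Fin N)) :=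
    (Equiv.ofInjective ι ι.injective).symm.trans (Equiv.ofInjective f f.injective) with he₀
  obtain ⟨σ, hσ⟩ := (Equiv.Set.compl e₀).symm e₁
  refine ⟨σ, fun j => ?_⟩
  have h := hσ ⟨ι j, Set.mem_range_self j⟩
  simp only [he₀, Equiv.trans_apply] at h
  have h2 : (Equiv.ofInjective ι ι.injective).symm ⟨ι j, Set.mem_range_self j⟩ = j := by
    apply (Equiv.ofInjective ι ι.injective).injective
    simp [Equiv.apply_symm_apply]
  rw [h2] at h
  simpa using h

private lemma aux_pow_le (N ℓ : ℕ) :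
    N ^ ℓ ≤ N.descFactorial ℓ + ℓ * ℓ * N ^ (ℓ - 1) := by
  induction ℓ with
  | zero => simp
  | succ ℓ ih =>
    have hd : N.descFactorial ℓ ≤ N ^ ℓ := Nat.descFactorial_le_pow N ℓ
    have h1 : ℓ * (ℓ * (N * N ^ (ℓ - 1))) ≤ ℓ * (ℓ * N ^ ℓ) := by
      cases ℓ with
      | zero => simp
      | succ m =>
        have : N * N ^ (m + 1 - 1) = N ^ (m + 1) := by
          rw [Nat.add_sub_cancel, pow_succ, Nat.mul_comm]
        rw [this]
    have h2 : N * N ^ ℓ ≤ N * N.descFactorial ℓ + ℓ * (ℓ * (N * N ^ (ℓ - 1))) := by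
      calc N * N ^ ℓ ≤ N * (N.descFactorial ℓ + ℓ * ℓ * N ^ (ℓ - 1)) :=
            Nat.mul_le_mul_left N ih
        _ = N * N.descFactorial ℓ + ℓ * (ℓ * (N * N ^ (ℓ - 1))) := by ring
    have h5 : N * N.descFactorial ℓ ≤ (N - ℓ) * N.descFactorial ℓ + ℓ * N.descFactorial ℓ := by
      calc N * N.descFactorial ℓ ≤ ((N - ℓ) + ℓ) * N.descFactorial ℓ :=
            Nat.mul_le_mul_right _ (by omega)
        _ = _ := by ring
    have h6 : ℓ * N.descFactorial ℓ ≤ ℓ * N ^ ℓ := Nat.mul_le_mul_left ℓ hd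
    have h7 : ℓ * N ^ ℓ + ℓ * (ℓ * N ^ ℓ) ≤ (ℓ + 1) * (ℓ + 1) * N ^ ℓ := by
      have : ℓ + ℓ * ℓ ≤ (ℓ + 1) * (ℓ + 1) := by nlinarith
      calc ℓ * N ^ ℓ + ℓ * (ℓ * N ^ ℓ) = (ℓ + ℓ * ℓ) * N ^ ℓ := by ring
        _ ≤ (ℓ + 1) * (ℓ + 1) * N ^ ℓ := Nat.mul_le_mul_right _ this
    calc N ^ (ℓ + 1) = N * N ^ ℓ := by ring
      _ ≤ (N - ℓ) * N.descFactorial ℓ + (ℓ + 1) * (ℓ + 1) * N ^ ℓ := by omega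
      _ = N.descFactorial (ℓ + 1) + (ℓ + 1) * (ℓ + 1) * N ^ (ℓ + 1 - 1) := by
          rw [Nat.descFactorial_succ]; simp

/-- Moment factorization for exchangeable `[0,1]`-valued families: for every `k, ℓ ∈ ℕ`,
`E[((1/N)∑_{i=1}^N X_i^k)^ℓ] - E[∏_{j=1}^ℓ X_{i_j}^k] → 0` as `N → ∞`, uniformly over all
choices of `ℓ` distinct indices `i_1, …, i_ℓ`. -/
theorem exchangeable_moment_factorization
    {Ω : ℕ → Type*} [∀ N, MeasurableSpace (Ω N)]
    (μ : ∀ N, Measure (Ω N)) (hprob : ∀ N, IsProbabilityMeasure (μ N))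
    (X : ∀ N, Fin N → Ω N → ℝ)
    (hmeas : ∀ N (i : Fin N), Measurable (X N i))
    (hrange : ∀ N (i : Fin N) ω, X N i ω ∈ Set.Icc (0 : ℝ) 1)
    (hexch : ∀ N (σ : Equiv.Perm (Fin N)),
      Measure.map (fun ω (i : Fin N) => X N (σ i) ω) (μ N) =
        Measure.map (fun ω (i : Fin N) => X N i ω) (μ N))
    (k ℓ : ℕ) :
    ∀ ε : ℝ, 0 < ε → ∃ N₀ : ℕ, ∀ N : ℕ, N₀ ≤ N → ∀ ι : Fin ℓ ↪ Fin N,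
      |(∫ ω, ((N : ℝ)⁻¹ * ∑ i : Fin N, X N i ω ^ k) ^ ℓ ∂μ N) -
        ∫ ω, ∏ j : Fin ℓ, X N (ι j) ω ^ k ∂μ N| < ε := by
  classical
  intro ε hε
  refine ⟨max (max ℓ 1) (⌈2 * (ℓ : ℝ) * ℓ / ε⌉₊ + 1), fun N hN ι => ?_⟩
  have hprobN := hprob N
  have hN1 : 1 ≤ N := le_trans (le_trans (le_max_right ℓ 1) (le_max_left _ _)) hN
  rcases Nat.eq_zero_or_pos ℓ with rfl | hℓ
  · simpa using hε
  -- basic bounds on the random variables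
  have hbound : ∀ (f : Fin ℓ → Fin N) (ω : Ω N),
      (∏ j, X N (f j) ω ^ k) ∈ Set.Icc (0 : ℝ) 1 := by
    intro f ω
    constructor
    · exact Finset.prod_nonneg fun j _ => pow_nonneg (hrange N (f j) ω).1 k
    · exact Finset.prod_le_one (fun j _ => pow_nonneg (hrange N (f j) ω).1 k)
        (fun j _ => pow_le_one₀ (hrange N (f j) ω).1 (hrange N (f j) ω).2)
  have hmeasf : ∀ (f : Fin ℓ → Fin N),
      Measurable (fun ω => ∏ j, X N (f j) ω ^ k) :=
    fun f => Finset.measurable_prod _ fun j _ => (hmeas N (f j)).pow_const k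
  have hint : ∀ (f : Fin ℓ → Fin N),
      Integrable (fun ω => ∏ j, X N (f j) ω ^ k) (μ N) := by
    intro f
    refine (integrable_const (1 : ℝ)).mono' (hmeasf f).aestronglyMeasurable ?_
    refine Filter.Eventually.of_forall fun ω => ?_
    rw [Real.norm_eq_abs, abs_of_nonneg (hbound f ω).1]
    exact (hbound f ω).2
  set m : (Fin ℓ → Fin N) → ℝ := fun f => ∫ ω, ∏ j, X N (f j) ω ^ k ∂μ N with hm
  have hm01 : ∀ f, m f ∈ Set.Icc (0 : ℝ) 1 := by
    intro f
    constructor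
    · exact integral_nonneg fun ω => (hbound f ω).1
    · calc m f ≤ ∫ _, (1 : ℝ) ∂μ N :=
            integral_mono (hint f) (integrable_const 1) fun ω => (hbound f ω).2
        _ = 1 := by simp
  -- exchangeability: all injective terms give the same expectation
  have hinj : ∀ (f : Fin ℓ → Fin N), Function.Injective f → m f = m ι := by
    intro f hf
    obtain ⟨σ, hσ⟩ := aux_exists_perm_comp ι ⟨f, hf⟩
    have hg : Measurable (fun v : Fin N → ℝ => ∏ j, v (ι j) ^ k) :=
      Finset.measurable_prod _ fun j _ => ((measurable_pi_apply (ι j)).pow_const k)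
    have hZ : Measurable (fun ω (i : Fin N) => X N (σ i) ω) :=
      measurable_pi_lambda _ fun i => hmeas N (σ i)
    have hY : Measurable (fun ω (i : Fin N) => X N i ω) :=
      measurable_pi_lambda _ fun i => hmeas N i
    calc m f = ∫ ω, ∏ j, X N (σ (ι j)) ω ^ k ∂μ N := by
          simp only [hm]
          exact integral_congr_ae (Filter.Eventually.of_forall fun ω =>
            Finset.prod_congr rfl fun j _ => by rw [hσ j]; rfl)
      _ = ∫ v, ∏ j, v (ι j) ^ k ∂(Measure.map (fun ω (i : Fin N) => X N (σ i) ω) (μ N)) :=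
          (integral_map hZ.aemeasurable hg.aestronglyMeasurable).symm
      _ = ∫ v, ∏ j, v (ι j) ^ k ∂(Measure.map (fun ω (i : Fin N) => X N i ω) (μ N)) := by
          rw [hexch N σ]
      _ = m ι := integral_map hY.aemeasurable hg.aestronglyMeasurable
  -- expansion of the power of the average
  have hexp : (∫ ω, ((N : ℝ)⁻¹ * ∑ i : Fin N, X N i ω ^ k) ^ ℓ ∂μ N)
      = ((N : ℝ) ^ ℓ)⁻¹ * ∑ f : Fin ℓ → Fin N, m f := by
    have hptw : ∀ ω, ((N : ℝ)⁻¹ * ∑ i : Fin N, X N i ω ^ k) ^ ℓ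
        = ((N : ℝ) ^ ℓ)⁻¹ * ∑ f : Fin ℓ → Fin N, ∏ j, X N (f j) ω ^ k := by
      intro ω
      rw [mul_pow, inv_pow]
      congr 1
      exact Fintype.sum_pow (fun i => X N i ω ^ k) ℓ
    simp_rw [hptw]
    rw [integral_const_mul, integral_finset_sum _ fun f _ => hint f]
  -- counting
  set S : Finset (Fin ℓ → Fin N) := Finset.univ.filter (fun f => Function.Injective f) with hS
  have hScard : S.card = N.descFactorial ℓ := by
    rw [hS, ← Fintype.card_subtype]
    rw [Fintype.card_congr (Equiv.subtypeInjectiveEquivEmbedding (Fin ℓ) (Fin N))]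
    rw [Fintype.card_embedding_eq]
    simp
  have hsplit : ∑ f : Fin ℓ → Fin N, m f
      = S.card * m ι + ∑ f ∈ Finset.univ.filter (fun f => ¬ Function.Injective f), m f := by
    rw [← Finset.sum_filter_add_sum_filter_not Finset.univ (fun f => Function.Injective f) m]
    congr 1
    rw [Finset.sum_congr rfl fun f hf => hinj f (Finset.mem_filter.mp hf).2]
    rw [Finset.sum_const, nsmul_eq_mul, hS]
  have hcardsum : S.card + (Finset.univ.filter
      (fun f : Fin ℓ → Fin N => ¬ Function.Injective f)).card = N ^ ℓ := by
    rw [hS, Finset.card_filter_add_card_filter_not]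
    simp [Finset.card_univ]
  set R : ℝ := ∑ f ∈ Finset.univ.filter (fun f : Fin ℓ → Fin N => ¬ Function.Injective f), m f
    with hR
  have hRnonneg : 0 ≤ R := Finset.sum_nonneg fun f _ => (hm01 f).1
  set P : ℝ := (N : ℝ) ^ ℓ with hP
  set a : ℝ := (S.card : ℝ) with ha
  have hNpos : (0 : ℝ) < N := by exact_mod_cast hN1
  have hPpos : (0 : ℝ) < P := pow_pos hNpos ℓ
  have haP : a ≤ P := by
    rw [ha, hP]
    have : S.card ≤ N ^ ℓ := by omega
    calc (S.card : ℝ) ≤ ((N ^ ℓ : ℕ) : ℝ) := by exact_mod_cast this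
      _ = (N : ℝ) ^ ℓ := by push_cast; ring
  have hRle : R ≤ P - a := by
    have h1 : R ≤ ((Finset.univ.filter
        (fun f : Fin ℓ → Fin N => ¬ Function.Injective f)).card : ℝ) := by
      have := Finset.sum_le_card_nsmul (Finset.univ.filter
        (fun f : Fin ℓ → Fin N => ¬ Function.Injective f)) m 1 fun f _ => (hm01 f).2
      rwa [nsmul_eq_mul, mul_one] at this
    have h2 : ((Finset.univ.filter
        (fun f : Fin ℓ → Fin N => ¬ Function.Injective f)).card : ℝ) = P - a := by
      rw [hP, ha]
      have : (Finset.univ.filter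
          (fun f : Fin ℓ → Fin N => ¬ Function.Injective f)).card = N ^ ℓ - S.card := by omega
      rw [this, Nat.cast_sub (by omega)]
      push_cast; ring
    linarith
  -- the two integrals
  have hmι : (∫ ω, ∏ j : Fin ℓ, X N (ι j) ω ^ k ∂μ N) = m ι := rfl
  rw [hmι, hexp, hsplit]
  have hkey : |P⁻¹ * ((S.card : ℝ) * m ι + R) - m ι| ≤ 2 * (P - a) / P := by
    have heq : P⁻¹ * ((S.card : ℝ) * m ι + R) - m ι = ((a - P) * m ι + R) / P := by
      field_simp
      ring
    rw [heq, abs_div, abs_of_pos hPpos]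
    rw [div_le_div_iff_of_pos_right hPpos]
    have hmιa : |m ι| ≤ 1 := abs_le.mpr ⟨by linarith [(hm01 ι).1], (hm01 ι).2⟩
    calc |(a - P) * m ι + R| ≤ |(a - P) * m ι| + |R| := abs_add_le _ _
      _ = (P - a) * |m ι| + R := by
          rw [abs_mul, abs_of_nonpos (by linarith : a - P ≤ 0), abs_of_nonneg hRnonneg]
          ring
      _ ≤ (P - a) * 1 + (P - a) := by
          have h0 : 0 ≤ P - a := by linarith
          have := mul_le_mul_of_nonneg_left hmιa h0
          linarith
      _ = 2 * (P - a) := by ring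
  have hsub : P - a ≤ (ℓ : ℝ) * ℓ * (N : ℝ) ^ (ℓ - 1) := by
    have h := aux_pow_le N ℓ
    have h' : (N : ℝ) ^ ℓ ≤ a + (ℓ : ℝ) * ℓ * (N : ℝ) ^ (ℓ - 1) := by
      rw [ha, hScard]
      exact_mod_cast h
    rw [hP]; linarith
  have hchain : 2 * (P - a) / P ≤ 2 * (ℓ : ℝ) * ℓ / N := by
    rw [div_le_div_iff₀ hPpos hNpos]
    have hPN : P = (N : ℝ) ^ (ℓ - 1) * N := by
      rw [hP, ← pow_succ]
      congr 1
      omega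
    have hpow : (0 : ℝ) ≤ (N : ℝ) ^ (ℓ - 1) := le_of_lt (pow_pos hNpos _)
    rw [hPN]
    nlinarith [hsub, hNpos]
  have hfin : 2 * (ℓ : ℝ) * ℓ / N < ε := by
    have hNc : (⌈2 * (ℓ : ℝ) * ℓ / ε⌉₊ + 1 : ℕ) ≤ N :=
      le_trans (le_max_right _ _) hN
    have hx : 2 * (ℓ : ℝ) * ℓ / ε < N := by
      have h1 : 2 * (ℓ : ℝ) * ℓ / ε ≤ ⌈2 * (ℓ : ℝ) * ℓ / ε⌉₊ := Nat.le_ceil _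
      have h2 : ((⌈2 * (ℓ : ℝ) * ℓ / ε⌉₊ : ℕ) : ℝ) + 1 ≤ N := by exact_mod_cast hNc
      linarith
    rw [div_lt_iff₀ hNpos]
    have hll : (0:ℝ) ≤ 2 * (ℓ:ℝ) * ℓ := by positivity
    rw [div_lt_iff₀ hε] at hx
    linarith
  calc |P⁻¹ * ((S.card : ℝ) * m ι + R) - m ι| ≤ 2 * (P - a) / P := hkey
    _ ≤ 2 * (ℓ : ℝ) * ℓ / N := hchain
    _ < ε := hfin
end

section
/- Let v, V be differentiable functions on (-∞, t₀] with values in ℝ and a Banach space respectively, satisfying d(|v(t)| + ‖V(t)‖)/dt ≤ α·(1 + K·e^{αt})·(|v(t)| + ‖V(t)‖) for constants α, K > 0, and suppose |v(t_n)| + ‖V(t_n)‖ = o(e^{αt_n}) along some sequence t_n → -∞. Then v ≡ 0 and V ≡ 0 on (-∞, t₀]. -/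
/-!
With `Φ t = α t + K e^{α t}` the coefficient `α (1 + K e^{α t})` is `Φ'`, so the integrating factor
makes `h e^{-Φ}` nonincreasing on `(-∞, t₀]`. Along `t_n → -∞` we have
`h(t_n) e^{-Φ(t_n)} = (h(t_n) / e^{α t_n}) e^{-K e^{α t_n}} → 0`, so `h e^{-Φ} ≤ 0` there, and since
`h = |v| + ‖V‖ ≥ 0` both `v` and `V` vanish.
-/

open Real Filter Set
open scoped Topology

theorem antitoneOn_mul_exp_neg_of_hasDerivAt_le {D : Set ℝ} (hD : Convex ℝ D)
    {f f' Φ φ : ℝ → ℝ} (hf : ∀ x ∈ D, HasDerivAt f (f' x) x)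
    (hΦ : ∀ x ∈ D, HasDerivAt Φ (φ x) x) (hle : ∀ x ∈ D, f' x ≤ φ x * f x) :
    AntitoneOn (fun x => f x * exp (-Φ x)) D := by
  have hg : ∀ x ∈ D, HasDerivAt (fun x => f x * exp (-Φ x))
      ((f' x - φ x * f x) * exp (-Φ x)) x := fun x hx =>
    ((hf x hx).fun_mul (hΦ x hx).fun_neg.exp).congr_deriv (by ring)
  refine antitoneOn_of_hasDerivWithinAt_nonpos hD
    (fun x hx => (hg x hx).continuousAt.continuousWithinAt)
    (fun x hx => (hg x (interior_subset hx)).hasDerivWithinAt)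
    (fun x hx => mul_nonpos_of_nonpos_of_nonneg
      (sub_nonpos.2 (hle x (interior_subset hx))) (exp_pos _).le)

theorem AntitoneOn.le_of_tendsto_comp_atBot {g : ℝ → ℝ} {t₀ c : ℝ} {ι : Type*} {l : Filter ι}
    [l.NeBot] {u : ι → ℝ} (hg : AntitoneOn g (Iic t₀)) (hu : Tendsto u l atBot)
    (hlim : Tendsto (fun i => g (u i)) l (𝓝 c)) {t : ℝ} (ht : t ≤ t₀) : g t ≤ c :=
  ge_of_tendsto hlim <| (hu.eventually (eventually_le_atBot t)).mono fun _ hi =>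
    hg (hi.trans ht) ht hi

theorem hasDerivAt_mul_add_mul_exp_mul (α K s : ℝ) :
    HasDerivAt (fun u => α * u + K * exp (α * u)) (α * (1 + K * exp (α * s))) s :=
  (((hasDerivAt_id' s).const_mul α).fun_add
    (((hasDerivAt_id' s).const_mul α).exp.const_mul K)).congr_deriv (by ring)

theorem tendsto_mul_exp_neg_mul_add_mul_exp_mul {α K : ℝ} (hα : 0 < α) {ι : Type*}
    {l : Filter ι} {f u : ι → ℝ} (hu : Tendsto u l atBot)
    (hf : Tendsto (fun i => f i / exp (α * u i)) l (𝓝 0)) :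
    Tendsto (fun i => f i * exp (-(α * u i + K * exp (α * u i)))) l (𝓝 0) := by
  have hexp : Tendsto (fun i => exp (α * u i)) l (𝓝 0) :=
    tendsto_exp_atBot.comp ((tendsto_const_mul_atBot_of_pos hα).2 hu)
  have hfactor : Tendsto (fun i => exp (-(K * exp (α * u i)))) l (𝓝 1) := by
    simpa using (hexp.const_mul K).neg.rexp
  convert hf.mul hfactor using 1
  · ext i
    rw [neg_add, exp_add, exp_neg (α * u i), div_eq_mul_inv]
    ring
  · simp

theorem gronwall_entrance_law_uniqueness_general
    {E : Type*} [NormedAddCommGroup E]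
    (α K t₀ : ℝ) (hα : 0 < α)
    (v : ℝ → ℝ) (V : ℝ → E)
    (h' : ℝ → ℝ)
    (hh : ∀ t : ℝ, t ≤ t₀ → HasDerivAt (fun s => |v s| + ‖V s‖) (h' t) t)
    (hineq : ∀ t : ℝ, t ≤ t₀ →
      h' t ≤ α * (1 + K * Real.exp (α * t)) * (|v t| + ‖V t‖))
    (tn : ℕ → ℝ) (htn : Tendsto tn atTop atBot)
    (hsmall : Tendsto (fun n => (|v (tn n)| + ‖V (tn n)‖) / Real.exp (α * tn n)) atTop (𝓝 0)) :
    ∀ t : ℝ, t ≤ t₀ → v t = 0 ∧ V t = 0 := by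
  intro t ht
  have hanti := antitoneOn_mul_exp_neg_of_hasDerivAt_le (convex_Iic t₀) hh
    (fun s _ => hasDerivAt_mul_add_mul_exp_mul α K s) hineq
  have hle := hanti.le_of_tendsto_comp_atBot htn
    (tendsto_mul_exp_neg_mul_add_mul_exp_mul hα htn hsmall) ht
  have hzero : |v t| + ‖V t‖ = 0 :=
    le_antisymm (nonpos_of_mul_nonpos_left hle (exp_pos _)) (by positivity)
  rw [add_eq_zero_iff_of_nonneg (abs_nonneg _) (norm_nonneg _)] at hzero
  exact ⟨abs_eq_zero.1 hzero.1, norm_eq_zero.1 hzero.2⟩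

/-- Gronwall-type uniqueness for entrance laws: if `v : ℝ → ℝ` and `V : ℝ → E` (E a Banach
space) are differentiable on `(-∞, t₀]`, the function `h(t) = |v(t)| + ‖V(t)‖` is differentiable
with `h'(t) ≤ α(1 + K e^{αt}) h(t)` there, and `h(t_n) = o(e^{α t_n})` along some sequence
`t_n → -∞`, then `v ≡ 0` and `V ≡ 0` on `(-∞, t₀]`. -/
theorem gronwall_entrance_law_uniqueness
    {E : Type*} [NormedAddCommGroup E] [NormedSpace ℝ E] [CompleteSpace E]
    (α K t₀ : ℝ) (hα : 0 < α) (hK : 0 < K)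
    (v : ℝ → ℝ) (V : ℝ → E)
    (hv : ∀ t : ℝ, t ≤ t₀ → DifferentiableAt ℝ v t)
    (hV : ∀ t : ℝ, t ≤ t₀ → DifferentiableAt ℝ V t)
    (h' : ℝ → ℝ)
    (hh : ∀ t : ℝ, t ≤ t₀ → HasDerivAt (fun s => |v s| + ‖V s‖) (h' t) t)
    (hineq : ∀ t : ℝ, t ≤ t₀ →
      h' t ≤ α * (1 + K * Real.exp (α * t)) * (|v t| + ‖V t‖))
    (tn : ℕ → ℝ) (htn : Tendsto tn atTop atBot)
    (hsmall : Tendsto (fun n => (|v (tn n)| + ‖V (tn n)‖) / Real.exp (α * tn n)) atTop (𝓝 0)) :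
    ∀ t : ℝ, t ≤ t₀ → v t = 0 ∧ V t = 0 :=
  gronwall_entrance_law_uniqueness_general α K t₀ hα v V h' hh hineq tn htn hsmall
end

section
/- Let u* solve u*'(t) = α(t)[u*(t) - b(t)·u*(t)²] on ℝ with e^{-αt}u*(t) → 1 as t → -∞, where |α(t) - α| ≤ K e^{αt}, |b(t) - b| ≤ K e^{αt}, α, b, K > 0, and 0 ≤ u*(t) ≤ C e^{αt}. Let û solve the same equation with b(t) replaced by the constant b and the same boundary behaviour at -∞. Then |u*(t) - û(t)| = O(e^{3αt}) as t → -∞; i.e., there exist constants M, T with |u*(t) - û(t)| ≤ M e^{3αt} for all t ≤ T. -/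
/-!
Rescaling by `exp (-α t)` turns `u* - û` into a solution `z` of a linear equation
`z' = p z + q` with `p = O(e^{αt})`, `q = O(e^{2αt})` and `z → 0` at `-∞`: the
coefficients differ only through `b(t) - b = O(e^{αt})` and `u* = O(e^{αt})`. Since `p` is
integrable at `-∞`, its primitive `Ψ` is bounded there, so `exp (-Ψ) z` has derivative
`O(e^{2αt})` and tends to `0`; integrating from `-∞` gives `z = O(e^{2αt})`, that is
`u* - û = O(e^{3αt})`.
-/

open Real Filter Asymptotics
open scoped Topology

theorem hasDerivAt_div_mul_exp (c : ℝ) {α : ℝ} (hα : α ≠ 0) (t : ℝ) :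
    HasDerivAt (fun t => c / α * exp (α * t)) (c * exp (α * t)) t := by
  refine ((((hasDerivAt_id' t).const_mul α).exp.const_mul (c / α))).congr_deriv ?_
  field_simp

section Fencing

variable {f f' g g' : ℝ → ℝ} {T : ℝ}

theorem abs_sub_le_sub_of_abs_deriv_le (hf : ∀ t ≤ T, HasDerivAt f (f' t) t)
    (hg : ∀ t ≤ T, HasDerivAt g (g' t) t) (hle : ∀ t ≤ T, |f' t| ≤ g' t) {s t : ℝ}
    (hst : s ≤ t) (ht : t ≤ T) : |f t - f s| ≤ g t - g s := by
  have hIcc : ∀ x ∈ Set.Icc s t, x ≤ T := fun x hx => hx.2.trans ht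
  have hIco : ∀ x ∈ Set.Ico s t, x ≤ T := fun x hx => hx.2.le.trans ht
  exact image_norm_le_of_norm_deriv_right_le_deriv_boundary' (f := fun x => f x - f s)
    (B := fun x => g x - g s)
    (fun x hx => ((hf x (hIcc x hx)).continuousAt.sub continuousAt_const).continuousWithinAt)
    (fun x hx => ((hf x (hIco x hx)).sub_const _).hasDerivWithinAt) (by simp)
    (fun x hx => ((hg x (hIcc x hx)).continuousAt.sub continuousAt_const).continuousWithinAt)
    (fun x hx => ((hg x (hIco x hx)).sub_const _).hasDerivWithinAt)
    (fun x hx => hle x (hIco x hx)) ⟨hst, le_rfl⟩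

theorem abs_le_of_abs_deriv_le_of_tendsto_atBot (hf : ∀ t ≤ T, HasDerivAt f (f' t) t)
    (hg : ∀ t ≤ T, HasDerivAt g (g' t) t) (hle : ∀ t ≤ T, |f' t| ≤ g' t)
    (hf0 : Tendsto f atBot (𝓝 0)) (hg0 : Tendsto g atBot (𝓝 0)) {t : ℝ} (ht : t ≤ T) :
    |f t| ≤ g t := by
  have hlimf : Tendsto (fun s => |f t - f s|) atBot (𝓝 |f t|) := by
    simpa using (tendsto_const_nhds.sub hf0).abs
  have hlimg : Tendsto (fun s => g t - g s) atBot (𝓝 (g t)) := by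
    simpa using tendsto_const_nhds.sub hg0
  exact le_of_tendsto_of_tendsto hlimf hlimg <| (eventually_le_atBot t).mono
    fun s hs => abs_sub_le_sub_of_abs_deriv_le hf hg hle hs ht

end Fencing

theorem exists_primitive_abs_le_of_abs_le_mul_exp {p : ℝ → ℝ} {A α T : ℝ} (hα : 0 < α)
    (hp : Continuous p) (hpA : ∀ t ≤ T, |p t| ≤ A * exp (α * t)) :
    ∃ Ψ : ℝ → ℝ, (∀ t, HasDerivAt Ψ (p t) t) ∧ ∀ t ≤ T, |Ψ t| ≤ A / α * exp (α * T) := by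
  have hA : 0 ≤ A :=
    nonneg_of_mul_nonneg_left ((abs_nonneg _).trans (hpA T le_rfl)) (exp_pos _)
  have hΨ : ∀ t, HasDerivAt (fun t => ∫ s in T..t, p s) (p t) t := fun t =>
    (hp.integral_hasStrictDerivAt T t).hasDerivAt
  refine ⟨_, hΨ, fun t ht => ?_⟩
  have hinc := abs_sub_le_sub_of_abs_deriv_le (fun t _ => hΨ t)
    (fun t _ => hasDerivAt_div_mul_exp A hα.ne' t) hpA ht le_rfl
  have hg : 0 ≤ A / α * exp (α * t) := by positivity
  simp only [intervalIntegral.integral_same, zero_sub, abs_neg] at hinc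
  linarith

theorem isBigO_exp_atBot_of_hasDerivAt_mul_add {p q z : ℝ → ℝ} {α β : ℝ} (hα : 0 < α)
    (hβ : 0 < β) (hp : Continuous p) (hz : ∀ t, HasDerivAt z (p t * z t + q t) t)
    (hpO : p =O[atBot] fun t => exp (α * t)) (hqO : q =O[atBot] fun t => exp (β * t))
    (hz0 : Tendsto z atBot (𝓝 0)) : z =O[atBot] fun t => exp (β * t) := by
  obtain ⟨A, hA⟩ := hpO.bound
  obtain ⟨B, hB⟩ := hqO.bound
  obtain ⟨T, hT⟩ := eventually_atBot.1 (hA.and hB)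
  simp only [norm_eq_abs, abs_exp] at hT
  obtain ⟨Ψ, hΨ, hΨD⟩ :=
    exists_primitive_abs_le_of_abs_le_mul_exp hα hp fun t ht => (hT t ht).1
  set D := A / α * exp (α * T)
  have hexpΨ : ∀ t ≤ T, exp (Ψ t) ≤ exp D ∧ exp (-Ψ t) ≤ exp D := fun t ht => by
    have := abs_le.1 (hΨD t ht)
    exact ⟨exp_le_exp.2 (by linarith), exp_le_exp.2 (by linarith)⟩
  set y := fun t => exp (-Ψ t) * z t
  have hy : ∀ t, HasDerivAt y (exp (-Ψ t) * q t) t := fun t =>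
    ((hΨ t).neg.exp.mul (hz t)).congr_deriv (by simp only [Pi.neg_apply]; ring)
  have hy0 : Tendsto y atBot (𝓝 0) := by
    refine squeeze_zero_norm' ((eventually_le_atBot T).mono fun t ht => ?_)
      (by simpa using hz0.norm.const_mul (exp D))
    rw [norm_mul, norm_eq_abs, abs_exp]
    exact mul_le_mul_of_nonneg_right (hexpΨ t ht).2 (norm_nonneg _)
  have hG0 : Tendsto (fun t => exp D * B / β * exp (β * t)) atBot (𝓝 0) := by
    simpa using (tendsto_exp_atBot.comp (tendsto_id.const_mul_atBot hβ)).const_mul (exp D * B / β)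
  have hyG : ∀ t ≤ T, |y t| ≤ exp D * B / β * exp (β * t) := fun t ht =>
    abs_le_of_abs_deriv_le_of_tendsto_atBot (fun t _ => hy t)
      (fun t _ => hasDerivAt_div_mul_exp (exp D * B) hβ.ne' t)
      (fun t ht => by
        rw [abs_mul, abs_exp, mul_assoc]
        exact mul_le_mul (hexpΨ t ht).2 (hT t ht).2 (abs_nonneg _) (exp_pos _).le)
      hy0 hG0 ht
  refine IsBigO.of_bound (exp D * (exp D * B / β)) (eventually_atBot.2 ⟨T, fun t ht => ?_⟩)
  calc ‖z t‖ = exp (Ψ t) * |y t| := by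
        simp only [y, norm_eq_abs, abs_mul, abs_exp, ← mul_assoc, ← exp_add, add_neg_cancel,
          exp_zero, one_mul]
    _ ≤ exp D * (exp D * B / β * exp (β * t)) :=
        mul_le_mul (hexpΨ t ht).1 (hyG t ht) (abs_nonneg _) (exp_pos _).le
    _ = exp D * (exp D * B / β) * ‖exp (β * t)‖ := by rw [norm_eq_abs, abs_exp]; ring

theorem isBigO_exp_atBot_of_tendsto_exp_neg_mul {u : ℝ → ℝ} {α l : ℝ}
    (h : Tendsto (fun t => exp (-(α * t)) * u t) atBot (𝓝 l)) :
    u =O[atBot] fun t => exp (α * t) :=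
  ((isBigO_refl (fun t => exp (α * t)) atBot).mul (h.isBigO_one ℝ)).congr
    (fun t => by rw [← mul_assoc, ← exp_add, add_neg_cancel, exp_zero, one_mul])
    (fun t => mul_one _)

theorem hasDerivAt_exp_neg_mul_mul_sub_of_logistic {a β u w : ℝ → ℝ} {α b : ℝ}
    (hu : ∀ t, HasDerivAt u (a t * (u t - β t * u t ^ 2)) t)
    (hw : ∀ t, HasDerivAt w (a t * (w t - b * w t ^ 2)) t) (t : ℝ) :
    HasDerivAt (fun t => exp (-(α * t)) * (u t - w t))
      ((a t - α - a t * (b * (u t + w t))) * (exp (-(α * t)) * (u t - w t))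
        + exp (-(α * t)) * (a t * ((b - β t) * u t ^ 2))) t :=
  (((hasDerivAt_id t).const_mul α).neg.exp.mul ((hu t).sub (hw t))).congr_deriv
    (by simp only [id, Pi.neg_apply, Pi.sub_apply]; ring)

theorem logistic_constant_coefficient_comparison_general
    (α b K : ℝ) (hα : 0 < α)
    (afun bfun : ℝ → ℝ) (hac : Continuous afun)
    (haclose : ∀ t : ℝ, |afun t - α| ≤ K * Real.exp (α * t))
    (hbclose : ∀ t : ℝ, |bfun t - b| ≤ K * Real.exp (α * t))
    (ustar uhat : ℝ → ℝ)
    (hustar : ∀ t : ℝ, HasDerivAt ustar (afun t * (ustar t - bfun t * ustar t ^ 2)) t)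
    (huhat : ∀ t : ℝ, HasDerivAt uhat (afun t * (uhat t - b * uhat t ^ 2)) t)
    (hstar_lim : Tendsto (fun t : ℝ => Real.exp (-(α * t)) * ustar t) atBot (𝓝 1))
    (hhat_lim : Tendsto (fun t : ℝ => Real.exp (-(α * t)) * uhat t) atBot (𝓝 1)) :
    ∃ M T : ℝ, ∀ t : ℝ, t ≤ T → |ustar t - uhat t| ≤ M * Real.exp (3 * α * t) := by
  have hstarO := isBigO_exp_atBot_of_tendsto_exp_neg_mul hstar_lim
  have hhatO := isBigO_exp_atBot_of_tendsto_exp_neg_mul hhat_lim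
  have hexpO : (fun t => exp (α * t)) =O[atBot] fun _ => (1 : ℝ) :=
    (tendsto_exp_atBot.comp (tendsto_id.const_mul_atBot hα)).isBigO_one ℝ
  have haO : (fun t => afun t - α) =O[atBot] fun t => exp (α * t) :=
    IsBigO.of_bound K (Eventually.of_forall fun t => by simpa [abs_exp] using haclose t)
  have hbO : (fun t => b - bfun t) =O[atBot] fun t => exp (α * t) :=
    IsBigO.of_bound K (Eventually.of_forall fun t => by
      simpa [abs_exp, abs_sub_comm] using hbclose t)
  have ha1 : afun =O[atBot] fun _ => (1 : ℝ) := by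
    simpa using (haO.trans hexpO).add (isBigO_const_one ℝ α atBot)
  set p := fun t => afun t - α - afun t * (b * (ustar t + uhat t))
  set q := fun t => exp (-(α * t)) * (afun t * ((b - bfun t) * ustar t ^ 2))
  set z := fun t => exp (-(α * t)) * (ustar t - uhat t)
  have hz : ∀ t, HasDerivAt z (p t * z t + q t) t :=
    hasDerivAt_exp_neg_mul_mul_sub_of_logistic hustar huhat
  have hp : Continuous p :=
    have hstarc := continuous_iff_continuousAt.2 fun t => (hustar t).continuousAt
    have hhatc := continuous_iff_continuousAt.2 fun t => (huhat t).continuousAt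
    (hac.sub continuous_const).sub (hac.mul (continuous_const.mul (hstarc.add hhatc)))
  have hpO : p =O[atBot] fun t => exp (α * t) :=
    haO.sub ((ha1.mul ((hstarO.add hhatO).const_mul_left b)).congr_right fun t => one_mul _)
  have hqO : q =O[atBot] fun t => exp (2 * α * t) :=
    ((isBigO_refl (fun t => exp (-(α * t))) atBot).mul
      (ha1.mul (hbO.mul (hstarO.pow 2)))).congr_right fun t => by
        simp only [one_mul, sq, ← exp_add]; ring_nf
  have hz0 : Tendsto z atBot (𝓝 0) := by
    simpa [z, mul_sub] using hstar_lim.sub hhat_lim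
  have hvO : (fun t => ustar t - uhat t) =O[atBot] fun t => exp (3 * α * t) :=
    ((isBigO_refl (fun t => exp (α * t)) atBot).mul
      (isBigO_exp_atBot_of_hasDerivAt_mul_add hα (by positivity) hp hz hpO hqO hz0)).congr
      (fun t => by simp only [z, ← mul_assoc, ← exp_add, add_neg_cancel, exp_zero, one_mul])
      (fun t => by rw [← exp_add]; ring_nf)
  obtain ⟨M, hM⟩ := hvO.bound
  obtain ⟨T, hT⟩ := eventually_atBot.1 hM
  exact ⟨M, T, fun t ht => by simpa only [norm_eq_abs, abs_exp] using hT t ht⟩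

/-- Comparison of the logistic-type solutions with variable and constant coefficient `b`:
if `u*` solves `u*' = α(t)[u* - b(t)(u*)²]` and `û` solves the same equation with `b(t)`
replaced by the constant `b`, both with `e^{-αt}u(t) → 1` as `t → -∞`, with
`|α(t) - α| ≤ K e^{αt}`, `|b(t) - b| ≤ K e^{αt}`, and both solutions nonnegative and bounded
by `C e^{αt}` for `t ≤ T₀`, then `|u*(t) - û(t)| = O(e^{3αt})` as `t → -∞`. -/
theorem logistic_constant_coefficient_comparison
    (α b K C T₀ : ℝ) (hα : 0 < α) (hb : 0 < b) (hK : 0 < K) (hC : 0 < C)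
    (afun bfun : ℝ → ℝ) (hac : Continuous afun) (hbc : Continuous bfun)
    (haclose : ∀ t : ℝ, |afun t - α| ≤ K * Real.exp (α * t))
    (hbclose : ∀ t : ℝ, |bfun t - b| ≤ K * Real.exp (α * t))
    (ustar uhat : ℝ → ℝ)
    (hustar : ∀ t : ℝ, HasDerivAt ustar (afun t * (ustar t - bfun t * ustar t ^ 2)) t)
    (huhat : ∀ t : ℝ, HasDerivAt uhat (afun t * (uhat t - b * uhat t ^ 2)) t)
    (hstar_lim : Tendsto (fun t : ℝ => Real.exp (-(α * t)) * ustar t) atBot (𝓝 1))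
    (hhat_lim : Tendsto (fun t : ℝ => Real.exp (-(α * t)) * uhat t) atBot (𝓝 1))
    (hstar_bd : ∀ t : ℝ, t ≤ T₀ → 0 ≤ ustar t ∧ ustar t ≤ C * Real.exp (α * t))
    (hhat_bd : ∀ t : ℝ, t ≤ T₀ → 0 ≤ uhat t ∧ uhat t ≤ C * Real.exp (α * t)) :
    ∃ M T : ℝ, ∀ t : ℝ, t ≤ T → |ustar t - uhat t| ≤ M * Real.exp (3 * α * t) :=
  logistic_constant_coefficient_comparison_general α b K hα afun bfun hac haclose hbclose ustar uhat
    hustar huhat hstar_lim hhat_lim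
end
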